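/- arXiv:2210.03655 — 2 statements merged into one kernel-verified Lean document; each statement's English description precedes it below -/
import Mathlib

section
/- Let ω₂, ω₃ be real numbers and 0 < ρ₁ < ρ₂ < 1. Let D be the 4×4 real matrix with rows [−cos(πρ₁ω₂), −sin(πρ₁ω₂), 0, 0], [ω₂sin(πρ₁ω₂), −ω₂cos(πρ₁ω₂), 0, 0], [cos(πρ₂ω₂), sin(πρ₂ω₂), −cos(πρ₂ω₃), −sin(πρ₂ω₃)], and [−ω₂sin(πρ₂ω₂), ω₂cos(πρ₂ω₂), ω₃sin(πρ₂ω₃), −ω₃cos(πρ₂ω₃)]. Then det(D) = ω₂·ω₃. In particular, D is nonsingular whenever ω₂ ≠ 0 and ω₃ ≠ 0. -/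
/-! The matrix is block lower triangular, so its determinant is the product of the two diagonal
`2 × 2` blocks; each of these is, up to sign, the Wronskian matrix of `cos (ω x), sin (ω x)`,
whose determinant is `ω` by `sin² + cos² = 1`. -/

open Real Matrix

theorem Matrix.det_fin_four_of_upper_right_eq_zero {R : Type*} [CommRing R]
    (a b c d e f g h i j k l : R) :
    !![a, b, 0, 0; c, d, 0, 0; e, f, g, h; i, j, k, l].det = !![a, b; c, d].det * !![g, h; k, l].det := by
  rw [det_fin_two_of, det_fin_two_of]
  simp [det_succ_row_zero, Fin.sum_univ_succ, Fin.succAbove]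
  ring

theorem Real.det_neg_cos_neg_sin_wronskian (ω θ : ℝ) :
    !![-cos θ, -sin θ; ω * sin θ, -(ω * cos θ)].det = ω := by
  rw [det_fin_two_of]
  linear_combination ω * sin_sq_add_cos_sq θ

theorem stmt_0_general (ω₂ ω₃ ρ₁ ρ₂ : ℝ)
    (D : Matrix (Fin 4) (Fin 4) ℝ)
    (hD : D = !![-Real.cos (π * ρ₁ * ω₂), -Real.sin (π * ρ₁ * ω₂), 0, 0;
                 ω₂ * Real.sin (π * ρ₁ * ω₂), -(ω₂ * Real.cos (π * ρ₁ * ω₂)), 0, 0;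
                 Real.cos (π * ρ₂ * ω₂), Real.sin (π * ρ₂ * ω₂),
                   -Real.cos (π * ρ₂ * ω₃), -Real.sin (π * ρ₂ * ω₃);
                 -(ω₂ * Real.sin (π * ρ₂ * ω₂)), ω₂ * Real.cos (π * ρ₂ * ω₂),
                   ω₃ * Real.sin (π * ρ₂ * ω₃), -(ω₃ * Real.cos (π * ρ₂ * ω₃))]) :
    D.det = ω₂ * ω₃ ∧ (ω₂ ≠ 0 → ω₃ ≠ 0 → IsUnit D) := by
  have hdet : D.det = ω₂ * ω₃ := by
    rw [hD, det_fin_four_of_upper_right_eq_zero, det_neg_cos_neg_sin_wronskian,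
      det_neg_cos_neg_sin_wronskian]
  refine ⟨hdet, fun h₂ h₃ => ?_⟩
  rw [isUnit_iff_isUnit_det, isUnit_iff_ne_zero, hdet]
  exact mul_ne_zero h₂ h₃

theorem stmt_0 (ω₂ ω₃ ρ₁ ρ₂ : ℝ) (hρ₁ : 0 < ρ₁) (hρ₁₂ : ρ₁ < ρ₂) (hρ₂ : ρ₂ < 1)
    (D : Matrix (Fin 4) (Fin 4) ℝ)
    (hD : D = !![-Real.cos (π * ρ₁ * ω₂), -Real.sin (π * ρ₁ * ω₂), 0, 0;
                 ω₂ * Real.sin (π * ρ₁ * ω₂), -(ω₂ * Real.cos (π * ρ₁ * ω₂)), 0, 0;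
                 Real.cos (π * ρ₂ * ω₂), Real.sin (π * ρ₂ * ω₂),
                   -Real.cos (π * ρ₂ * ω₃), -Real.sin (π * ρ₂ * ω₃);
                 -(ω₂ * Real.sin (π * ρ₂ * ω₂)), ω₂ * Real.cos (π * ρ₂ * ω₂),
                   ω₃ * Real.sin (π * ρ₂ * ω₃), -(ω₃ * Real.cos (π * ρ₂ * ω₃))]) :
    D.det = ω₂ * ω₃ ∧ (ω₂ ≠ 0 → ω₃ ≠ 0 → IsUnit D) :=
  stmt_0_general ω₂ ω₃ ρ₁ ρ₂ D hD
end

section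
/- Let 0 < ρ₁ < ρ₂ < 1 and α₁, α₂, α₃ ∈ ℝ. For each positive integer j, define φⱼ(z) = sin(jz), (Lφⱼ)(z) = −j²sin(jz) + α(z)²sin(jz), μⱼ = (∫₀^π φⱼ·Lφⱼ dz)/(∫₀^π φⱼ² dz), and Eⱼ = (∫₀^π (Lφⱼ)² dz − μⱼ²·∫₀^π φⱼ² dz)/(∫₀^π (Lφⱼ)² dz) (defined for all j large enough that the denominator is nonzero). Then Eⱼ → 0 as j → ∞. -/
/-!
Write `s = sin (j ·)` and `L = (q - j²) s` with `q = α²`, `S = ∫ s² = π/2`, `A = ∫ q s²` and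
`B = ∫ q² s²`. Then `∫ L² = j⁴ S - 2 j² A + B` and `μ = (A - j² S) / S`, and the `j`-dependence
cancels in the numerator: `∫ L² - μ² S = B - A² / S`. Since `q` is bounded, so are `A` and `B`,
while the denominator grows like `j⁴ S`.
-/

open Real intervalIntegral Filter MeasureTheory Topology

noncomputable def rayleighQuotient (φ ψ : ℝ → ℝ) : ℝ :=
  (∫ z in (0:ℝ)..π, φ z * ψ z) / ∫ z in (0:ℝ)..π, φ z ^ 2

/-- Since `⟨φ, ψ⟩ = μ ‖φ‖²`, the numerator equals `‖ψ - μ φ‖²`. -/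
noncomputable def relResidualSq (φ ψ : ℝ → ℝ) : ℝ :=
  ((∫ z in (0:ℝ)..π, ψ z ^ 2) - rayleighQuotient φ ψ ^ 2 * ∫ z in (0:ℝ)..π, φ z ^ 2) /
    ∫ z in (0:ℝ)..π, ψ z ^ 2

theorem integral_sin_nat_mul_sq {j : ℕ} (hj : j ≠ 0) :
    ∫ z in (0:ℝ)..π, sin (j * z) ^ 2 = π / 2 := by
  have hj' : (j : ℝ) ≠ 0 := Nat.cast_ne_zero.2 hj
  rw [integral_comp_mul_left (fun z => sin z ^ 2) hj', integral_sin_sq, sin_nat_mul_pi,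
    mul_zero, sin_zero, smul_eq_mul]
  field_simp
  ring

theorem tendsto_div_pow_of_abs_le {f : ℕ → ℝ} {C : ℝ} (hf : ∀ j, |f j| ≤ C) {n : ℕ}
    (hn : n ≠ 0) : Tendsto (fun j : ℕ => f j / (j : ℝ) ^ n) atTop (𝓝 0) := by
  refine squeeze_zero_norm (a := fun j : ℕ => C / (j : ℝ) ^ n) (fun j => ?_)
    (tendsto_const_nhds.div_atTop ((tendsto_pow_atTop hn).comp tendsto_natCast_atTop_atTop))
  rcases Nat.eq_zero_or_pos j with rfl | hj
  · simp [zero_pow hn]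
  · have hjn : (0 : ℝ) < (j : ℝ) ^ n := pow_pos (Nat.cast_pos.2 hj) n
    rw [norm_div, norm_of_nonneg hjn.le, div_le_div_iff_of_pos_right hjn]
    exact hf j

theorem tendsto_residual_ratio {A B : ℕ → ℝ} {S : ℝ} (hS : S ≠ 0)
    (hA : Tendsto (fun j : ℕ => A j / (j : ℝ) ^ 2) atTop (𝓝 0))
    (hB : Tendsto (fun j : ℕ => B j / (j : ℝ) ^ 4) atTop (𝓝 0)) :
    Tendsto (fun j : ℕ => (B j - A j ^ 2 / S) / ((j : ℝ) ^ 4 * S - 2 * (j : ℝ) ^ 2 * A j + B j))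
      atTop (𝓝 0) := by
  have hlim := (hB.sub ((hA.pow 2).div_const S)).div
    ((tendsto_const_nhds (x := S)).sub (hA.const_mul 2) |>.add hB) (by simpa using hS)
  rw [zero_pow two_ne_zero, zero_div, sub_zero, mul_zero, sub_zero, add_zero, zero_div] at hlim
  refine hlim.congr' ?_
  filter_upwards [eventually_ne_atTop 0] with j hj
  have hj' : (j : ℝ) ≠ 0 := Nat.cast_ne_zero.2 hj
  simp only [Pi.div_apply]
  field_simp

section BoundedPotential

variable {q : ℝ → ℝ} {M : ℝ}

theorem abs_sq_le_sq_of_abs_le (hM : ∀ z, |q z| ≤ M) (z : ℝ) : |q z ^ 2| ≤ M ^ 2 := by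
  rw [abs_pow]
  exact pow_le_pow_left₀ (abs_nonneg _) (hM z) 2

theorem intervalIntegrable_of_abs_le (hq : Measurable q) (hM : ∀ z, |q z| ≤ M) (a b : ℝ) :
    IntervalIntegrable q volume a b :=
  intervalIntegrable_iff.2 <|
    Measure.integrableOn_of_bounded measure_Ioc_lt_top.ne hq.aestronglyMeasurable
      (ae_of_all _ hM)

theorem abs_integral_mul_sin_sq_le (hM : ∀ z, |q z| ≤ M) (j : ℕ) :
    |∫ z in (0:ℝ)..π, q z * sin (j * z) ^ 2| ≤ M * π := by
  have hbound : ∀ z, |q z * sin (j * z) ^ 2| ≤ M := fun z => by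
    rw [abs_mul, abs_sq]
    nlinarith [hM z, sin_sq_le_one (j * z), sq_nonneg (sin (j * z)), abs_nonneg (q z)]
  simpa [abs_of_pos pi_pos] using
    norm_integral_le_of_norm_le_const (a := 0) (b := π)
      (f := fun z => q z * sin (j * z) ^ 2) fun z _ => hbound z

theorem relResidualSq_sin_nat_mul_eq (hq : Measurable q) (hM : ∀ z, |q z| ≤ M) {j : ℕ}
    (hj : j ≠ 0) :
    relResidualSq (fun z => sin (j * z)) (fun z => -(j : ℝ) ^ 2 * sin (j * z) + q z * sin (j * z)) =
      ((∫ z in (0:ℝ)..π, q z ^ 2 * sin (j * z) ^ 2) -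
          (∫ z in (0:ℝ)..π, q z * sin (j * z) ^ 2) ^ 2 / (π / 2)) /
        ((j : ℝ) ^ 4 * (π / 2) - 2 * (j : ℝ) ^ 2 * (∫ z in (0:ℝ)..π, q z * sin (j * z) ^ 2) +
          ∫ z in (0:ℝ)..π, q z ^ 2 * sin (j * z) ^ 2) := by
  set A := ∫ z in (0:ℝ)..π, q z * sin (j * z) ^ 2
  set B := ∫ z in (0:ℝ)..π, q z ^ 2 * sin (j * z) ^ 2
  have hS := integral_sin_nat_mul_sq hj
  have hsin : Continuous fun z : ℝ => sin (j * z) ^ 2 := by fun_prop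
  have hs : IntervalIntegrable (fun z : ℝ => sin (j * z) ^ 2) volume 0 π :=
    hsin.intervalIntegrable 0 π
  have hA : IntervalIntegrable (fun z => q z * sin (j * z) ^ 2) volume 0 π :=
    (intervalIntegrable_of_abs_le hq hM 0 π).mul_continuousOn hsin.continuousOn
  have hB : IntervalIntegrable (fun z => q z ^ 2 * sin (j * z) ^ 2) volume 0 π :=
    (intervalIntegrable_of_abs_le (hq.pow_const 2) (abs_sq_le_sq_of_abs_le hM) 0 π).mul_continuousOn
      hsin.continuousOn
  have hcross : ∫ z in (0:ℝ)..π, sin (j * z) * (-(j : ℝ) ^ 2 * sin (j * z) + q z * sin (j * z)) =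
      -(j : ℝ) ^ 2 * (π / 2) + A := by
    rw [← hS, ← intervalIntegral.integral_const_mul,
      ← intervalIntegral.integral_add (hs.const_mul _) hA]
    congr 1; funext z; ring
  have hnorm : ∫ z in (0:ℝ)..π, (-(j : ℝ) ^ 2 * sin (j * z) + q z * sin (j * z)) ^ 2 =
      (j : ℝ) ^ 4 * (π / 2) - 2 * (j : ℝ) ^ 2 * A + B := by
    rw [← hS, ← intervalIntegral.integral_const_mul, ← intervalIntegral.integral_const_mul,
      ← intervalIntegral.integral_sub (hs.const_mul _) (hA.const_mul _),
      ← intervalIntegral.integral_add ((hs.const_mul _).sub (hA.const_mul _)) hB]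
    congr 1; funext z; ring
  have hπ : π / 2 ≠ 0 := by positivity
  simp only [relResidualSq, rayleighQuotient, hcross, hnorm, hS]
  field_simp
  ring

theorem tendsto_relResidualSq_sin_nat_mul (hq : Measurable q) (hM : ∀ z, |q z| ≤ M) :
    Tendsto (fun j : ℕ => relResidualSq (fun z => sin (j * z))
      (fun z => -(j : ℝ) ^ 2 * sin (j * z) + q z * sin (j * z))) atTop (𝓝 0) := by
  have hA := tendsto_div_pow_of_abs_le (abs_integral_mul_sin_sq_le hM) two_ne_zero
  have hB := tendsto_div_pow_of_abs_le
    (abs_integral_mul_sin_sq_le (abs_sq_le_sq_of_abs_le hM)) four_ne_zero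
  refine (tendsto_residual_ratio pi_div_two_pos.ne' hA hB).congr' ?_
  filter_upwards [eventually_ne_atTop 0] with j hj
  exact (relResidualSq_sin_nat_mul_eq hq hM hj).symm

end BoundedPotential

theorem stmt_11_general (ρ₁ ρ₂ α₁ α₂ α₃ : ℝ)
    (a : ℝ → ℝ)
    (ha : ∀ z, a z = if z < π * ρ₁ then α₁ else if z < π * ρ₂ then α₂ else α₃)
    (φ Lφ : ℕ → ℝ → ℝ)
    (hφ : ∀ j z, φ j z = Real.sin (j * z))
    (hLφ : ∀ j z, Lφ j z = -(j : ℝ) ^ 2 * Real.sin (j * z) + (a z) ^ 2 * Real.sin (j * z))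
    (μ E : ℕ → ℝ)
    (hμ : ∀ j, μ j = (∫ z in (0:ℝ)..π, φ j z * Lφ j z) / (∫ z in (0:ℝ)..π, (φ j z) ^ 2))
    (hE : ∀ j, E j = ((∫ z in (0:ℝ)..π, (Lφ j z) ^ 2)
        - (μ j) ^ 2 * ∫ z in (0:ℝ)..π, (φ j z) ^ 2) / (∫ z in (0:ℝ)..π, (Lφ j z) ^ 2)) :
    Tendsto E atTop (nhds 0) := by
  have ha_meas : Measurable a := by
    rw [funext ha]
    exact Measurable.ite measurableSet_Iio measurable_const
      (Measurable.ite measurableSet_Iio measurable_const measurable_const)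
  have ha_bdd : ∀ z, |a z ^ 2| ≤ α₁ ^ 2 + α₂ ^ 2 + α₃ ^ 2 := fun z => by
    rw [abs_of_nonneg (sq_nonneg _), ha z]
    split_ifs <;> linarith [sq_nonneg α₁, sq_nonneg α₂, sq_nonneg α₃]
  have hE_eq : E = fun j : ℕ => relResidualSq (fun z => sin (j * z))
      (fun z => -(j : ℝ) ^ 2 * sin (j * z) + a z ^ 2 * sin (j * z)) := by
    funext j
    simp only [hE, hμ, hφ, hLφ, relResidualSq, rayleighQuotient]
  rw [hE_eq]
  exact tendsto_relResidualSq_sin_nat_mul (ha_meas.pow_const 2) ha_bdd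

theorem stmt_11 (ρ₁ ρ₂ α₁ α₂ α₃ : ℝ)
    (hρ₁ : 0 < ρ₁) (hρ₁₂ : ρ₁ < ρ₂) (hρ₂ : ρ₂ < 1)
    (a : ℝ → ℝ)
    (ha : ∀ z, a z = if z < π * ρ₁ then α₁ else if z < π * ρ₂ then α₂ else α₃)
    (φ Lφ : ℕ → ℝ → ℝ)
    (hφ : ∀ j z, φ j z = Real.sin (j * z))
    (hLφ : ∀ j z, Lφ j z = -(j : ℝ) ^ 2 * Real.sin (j * z) + (a z) ^ 2 * Real.sin (j * z))
    (μ E : ℕ → ℝ)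
    (hμ : ∀ j, μ j = (∫ z in (0:ℝ)..π, φ j z * Lφ j z) / (∫ z in (0:ℝ)..π, (φ j z) ^ 2))
    (hE : ∀ j, E j = ((∫ z in (0:ℝ)..π, (Lφ j z) ^ 2)
        - (μ j) ^ 2 * ∫ z in (0:ℝ)..π, (φ j z) ^ 2) / (∫ z in (0:ℝ)..π, (Lφ j z) ^ 2)) :
    Tendsto E atTop (nhds 0) :=
  stmt_11_general ρ₁ ρ₂ α₁ α₂ α₃ a ha φ Lφ hφ hLφ μ E hμ hE
end
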